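/- arXiv:2412.18949 — 5 statements merged into one kernel-verified Lean document; each statement's English description precedes it below -/
import Mathlib

section
/- Let X be a metric space, λ ≥ 0 a real number, and n a cardinal number with #X < n. Then 2·d_GH(λΔₙ, X) = max{λ, diam X − λ}. -/
/-- `Δ` is a simplex of cardinality `n` and non-zero distance `l`: a metric
space with `n` points all of whose non-zero distances equal `l`. -/
def IsSimplexOf (Δ : Type) [MetricSpace Δ] [Fintype Δ] (n : ℕ) (l : ℝ) : Prop :=
  Fintype.card Δ = n ∧ ∀ x y : Δ, x ≠ y → dist x y = l

/-- If `X` is a (nonempty, finite) metric space, `l ≥ 0`, and `n` exceeds the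
cardinality of `X`, then `2 d_GH(lΔₙ, X) = max {l, diam X − l}`. -/
theorem two_ghDist_simplex_of_card_lt (X Δ : Type) [MetricSpace X] [Fintype X] [Nonempty X]
    [MetricSpace Δ] [Fintype Δ] [Nonempty Δ] (n : ℕ) (l : ℝ) (hl : 0 ≤ l)
    (hΔ : IsSimplexOf Δ n l) (hcard : Fintype.card X < n) :
    2 * GromovHausdorff.ghDist Δ X = max l (Metric.diam (Set.univ : Set X) - l) := by
  classical
  obtain ⟨hcardΔ, hd⟩ := hΔ
  set D := Metric.diam (Set.univ : Set X) with hD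
  have hXpos : 0 < Fintype.card X := Fintype.card_pos
  have hcardlt : Fintype.card X < Fintype.card Δ := by omega
  have hΔ2 : 2 ≤ Fintype.card Δ := by omega
  obtain ⟨a, b, hab⟩ := Fintype.exists_pair_of_one_lt_card (by omega : 1 < Fintype.card Δ)
  have hl0 : 0 < l := by
    have := hd a b hab
    rw [← this]
    exact dist_pos.2 hab
  have hDd : ∀ x y : X, dist x y ≤ D := fun x y =>
    Metric.dist_le_diam_of_mem (Set.finite_univ.isBounded) (Set.mem_univ x) (Set.mem_univ y)
  have hlmax : l ≤ max l (D - l) := le_max_left _ _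
  -- Upper bound
  obtain ⟨e⟩ : Nonempty (X ↪ Δ) := Function.Embedding.nonempty_of_card_le hcardlt.le
  have hinv : ∀ x : X, Function.invFun e (e x) = x :=
    Function.leftInverse_invFun e.injective
  have upper : GromovHausdorff.ghDist Δ X ≤ 0 + max l (D - l) / 2 + 0 := by
    apply GromovHausdorff.ghDist_le_of_approx_subsets
      (fun p : (Set.univ : Set Δ) => Function.invFun e p.1)
    · intro x
      exact ⟨x, Set.mem_univ x, by simp⟩
    · intro x
      exact ⟨⟨e x, Set.mem_univ _⟩, by simp [hinv]⟩
    · rintro ⟨p, -⟩ ⟨q, -⟩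
      rw [Subtype.dist_eq]
      by_cases hpq : p = q
      · subst hpq
        simpa using le_trans hl0.le hlmax
      · rw [hd p q hpq]
        have h0 : 0 ≤ dist (Function.invFun e p) (Function.invFun e q) := dist_nonneg
        have h1 : dist (Function.invFun e p) (Function.invFun e q) ≤ D := hDd _ _
        rw [abs_sub_le_iff]
        constructor
        · calc l - dist (Function.invFun e p) (Function.invFun e q) ≤ l := by linarith
            _ ≤ _ := hlmax
        · calc dist (Function.invFun e p) (Function.invFun e q) - l ≤ D - l := by linarith
            _ ≤ _ := le_max_right _ _
  -- Lower bounds, via the optimal coupling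
  set Z := GromovHausdorff.OptimalGHCoupling Δ X
  set F := GromovHausdorff.optimalGHInjl Δ X
  set G := GromovHausdorff.optimalGHInjr Δ X
  have hFiso : Isometry F := GromovHausdorff.isometry_optimalGHInjl Δ X
  have hGiso : Isometry G := GromovHausdorff.isometry_optimalGHInjr Δ X
  have hopt : Metric.hausdorffDist (Set.range F) (Set.range G)
      = GromovHausdorff.ghDist Δ X := GromovHausdorff.hausdorffDist_optimal
  have hne : EMetric.hausdorffEdist (Set.range F) (Set.range G) ≠ ⊤ := by
    apply Metric.hausdorffEdist_ne_top_of_nonempty_of_bounded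
      (Set.range_nonempty F) (Set.range_nonempty G)
    · exact (Set.finite_range F).isBounded
    · exact (Set.finite_range G).isBounded
  have ghnonneg : 0 ≤ GromovHausdorff.ghDist Δ X := by
    rw [← hopt]; exact Metric.hausdorffDist_nonneg
  -- l ≤ 2 * ghDist
  have lower1 : l ≤ 2 * GromovHausdorff.ghDist Δ X := by
    apply le_of_forall_pos_le_add
    intro ε hε
    have hlt : Metric.hausdorffDist (Set.range F) (Set.range G)
        < GromovHausdorff.ghDist Δ X + ε / 2 := by rw [hopt]; linarith
    have hch : ∀ δ : Δ, ∃ x : X, dist (F δ) (G x) < GromovHausdorff.ghDist Δ X + ε / 2 := by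
      intro δ
      obtain ⟨z, hz, hzd⟩ := Metric.exists_dist_lt_of_hausdorffDist_lt
        (Set.mem_range_self δ) hlt hne
      obtain ⟨x, rfl⟩ := hz
      exact ⟨x, hzd⟩
    choose g hg using hch
    obtain ⟨p, q, hpq, hgpq⟩ := Fintype.exists_ne_map_eq_of_card_lt g hcardlt
    have := hd p q hpq
    have h1 := hg p
    have h2 := hg q
    have htri : dist (F p) (F q) ≤ dist (F p) (G (g p)) + dist (G (g q)) (F q) := by
      rw [hgpq]
      exact dist_triangle _ _ _
    rw [hFiso.dist_eq, this] at htri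
    rw [dist_comm] at h2
    linarith
  -- D - l ≤ 2 * ghDist
  have lower2 : D - l ≤ 2 * GromovHausdorff.ghDist Δ X := by
    have : D ≤ l + 2 * GromovHausdorff.ghDist Δ X := by
      apply le_of_forall_pos_le_add
      intro ε hε
      have hlt : Metric.hausdorffDist (Set.range F) (Set.range G)
          < GromovHausdorff.ghDist Δ X + ε / 2 := by rw [hopt]; linarith
      apply Metric.diam_le_of_forall_dist_le (by linarith)
      intro x _ y _
      obtain ⟨z1, hz1, hzd1⟩ := Metric.exists_dist_lt_of_hausdorffDist_lt'
        (Set.mem_range_self x) hlt hne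
      obtain ⟨δ1, rfl⟩ := hz1
      obtain ⟨z2, hz2, hzd2⟩ := Metric.exists_dist_lt_of_hausdorffDist_lt'
        (Set.mem_range_self y) hlt hne
      obtain ⟨δ2, rfl⟩ := hz2
      have hdd : dist δ1 δ2 ≤ l := by
        by_cases h12 : δ1 = δ2
        · subst h12; simpa using hl0.le
        · exact (hd δ1 δ2 h12).le
      have htri : dist (G x) (G y) ≤
          dist (G x) (F δ1) + dist (F δ1) (F δ2) + dist (F δ2) (G y) := dist_triangle4 _ _ _ _
      rw [hGiso.dist_eq, hFiso.dist_eq, dist_comm (G x)] at htri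
      linarith
    linarith
  have upper' : 2 * GromovHausdorff.ghDist Δ X ≤ max l (D - l) := by linarith
  exact le_antisymm upper' (max_le lower1 lower2)
end

section
/- For a nonempty finite metric space X, a positive integer n ≤ #X, and real λ ≥ 0, twice the Gromov–Hausdorff distance between λΔₙ and X equals the infimum over all partitions D of X into n nonempty parts of max{diam D, λ − α(D), diam X − λ}. -/
/-- The distance between two subsets of a metric space:
`|AB| = inf {dist a b : a ∈ A, b ∈ B}`. -/
noncomputable def setDist {X : Type} [MetricSpace X] (A B : Set X) : ℝ :=
  sInf {d | ∃ a ∈ A, ∃ b ∈ B, dist a b = d}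

/-- The diameter `diam D` of the partition of `X` into the fibers of `f : X → Fin n`:
the supremum of the diameters of the parts. -/
noncomputable def partDiam {X : Type} [MetricSpace X] {n : ℕ} (f : X → Fin n) : ℝ :=
  ⨆ i, Metric.diam (f ⁻¹' {i})

/-- The value `α(D)` of the partition of `X` into the fibers of `f : X → Fin n`, `n ≥ 2`:
the infimum of the distances between distinct parts. -/
noncomputable def partAlpha {X : Type} [MetricSpace X] {n : ℕ} (f : X → Fin n) : ℝ :=
  sInf {d | ∃ i j : Fin n, i ≠ j ∧ d = setDist (f ⁻¹' {i}) (f ⁻¹' {j})}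

open Metric Set Function

section aux
variable {X : Type} [MetricSpace X] {n : ℕ}

lemma setDist_nonneg (A B : Set X) : 0 ≤ setDist A B :=
  Real.sInf_nonneg (by rintro d ⟨a, _, b, _, rfl⟩; exact dist_nonneg)

lemma setDist_le {A B : Set X} {p q : X} (hp : p ∈ A) (hq : q ∈ B) :
    setDist A B ≤ dist p q :=
  csInf_le ⟨0, by rintro d ⟨a, _, b, _, rfl⟩; exact dist_nonneg⟩ ⟨p, hp, q, hq, rfl⟩

lemma le_setDist {A B : Set X} {c : ℝ} (hA : A.Nonempty) (hB : B.Nonempty)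
    (h : ∀ p ∈ A, ∀ q ∈ B, c ≤ dist p q) : c ≤ setDist A B := by
  obtain ⟨a, ha⟩ := hA; obtain ⟨b, hb⟩ := hB
  exact le_csInf ⟨_, a, ha, b, hb, rfl⟩ (by rintro d ⟨p, hp, q, hq, rfl⟩; exact h p hp q hq)

lemma partAlpha_nonneg (f : X → Fin n) : 0 ≤ partAlpha f :=
  Real.sInf_nonneg (by rintro d ⟨i, j, hij, rfl⟩; exact setDist_nonneg _ _)

lemma partAlpha_le (f : X → Fin n) {i j : Fin n} (hij : i ≠ j) :
    partAlpha f ≤ setDist (f ⁻¹' {i}) (f ⁻¹' {j}) :=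
  csInf_le ⟨0, by rintro d ⟨i, j, hij, rfl⟩; exact setDist_nonneg _ _⟩ ⟨i, j, hij, rfl⟩

lemma le_partAlpha {f : X → Fin n} {c : ℝ} (hn : 2 ≤ n)
    (h : ∀ i j : Fin n, i ≠ j → c ≤ setDist (f ⁻¹' {i}) (f ⁻¹' {j})) : c ≤ partAlpha f := by
  refine le_csInf ⟨setDist (f ⁻¹' {(⟨0, by omega⟩ : Fin n)}) (f ⁻¹' {⟨1, by omega⟩}),
    ⟨0, by omega⟩, ⟨1, by omega⟩, by simp [Fin.ext_iff], rfl⟩ ?_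
  rintro d ⟨i, j, hij, rfl⟩; exact h i j hij

lemma partDiam_nonneg (f : X → Fin n) : 0 ≤ partDiam f :=
  Real.iSup_nonneg fun _ => diam_nonneg

lemma le_partDiam (f : X → Fin n) (i : Fin n) : Metric.diam (f ⁻¹' {i}) ≤ partDiam f := by
  unfold partDiam
  exact le_ciSup (f := fun i => Metric.diam (f ⁻¹' {i})) (Set.Finite.bddAbove (Set.finite_range _)) i

lemma partDiam_le {f : X → Fin n} {c : ℝ} (hn : 1 ≤ n)
    (h : ∀ i, Metric.diam (f ⁻¹' {i}) ≤ c) : partDiam f ≤ c := by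
  haveI : Nonempty (Fin n) := ⟨⟨0, by omega⟩⟩
  exact ciSup_le h

end aux

section split
variable {X : Type} [MetricSpace X] [Fintype X]

/-- refine a surjection onto `Fin k` with small fibers into one onto `Fin n`, `k ≤ n ≤ |X|`. -/
lemma refine_surj {c : ℝ} (hc : 0 ≤ c) (k : ℕ) :
    ∀ n : ℕ, k ≤ n → n ≤ Fintype.card X →
    (∃ f : X → Fin k, Surjective f ∧ ∀ i, Metric.diam (f ⁻¹' {i}) ≤ c) →
    ∃ f : X → Fin n, Surjective f ∧ ∀ i, Metric.diam (f ⁻¹' {i}) ≤ c := by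
  refine Nat.le_induction (fun _ h => h) ?_
  rintro n hkn IH hcard ⟨f, hf, hfib⟩
  obtain ⟨f, hf, hfib⟩ := IH (le_trans (Nat.le_succ n) hcard) ⟨f, hf, hfib⟩
  have hlt : Fintype.card (Fin n) < Fintype.card X := by simpa using hcard
  obtain ⟨x, y, hxy, hfeq⟩ := Fintype.exists_ne_map_eq_of_card_lt f hlt
  classical
  refine ⟨fun z => if z = x then Fin.last n else (f z).castSucc, ?_, ?_⟩
  · intro i
    refine Fin.lastCases ?_ ?_ i
    · exact ⟨x, if_pos rfl⟩
    · intro j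
      obtain ⟨z, hz⟩ := hf j
      by_cases hzx : z = x
      · refine ⟨y, ?_⟩
        have hyx : y ≠ x := fun h => hxy h.symm
        have hyj : f y = j := by rw [← hfeq, ← hzx]; exact hz
        show (if y = x then Fin.last n else (f y).castSucc) = j.castSucc
        rw [if_neg hyx, hyj]
      · refine ⟨z, ?_⟩
        show (if z = x then Fin.last n else (f z).castSucc) = j.castSucc
        rw [if_neg hzx, hz]
  · intro i
    refine Fin.lastCases ?_ ?_ i
    · have : (fun z => if z = x then Fin.last n else (f z).castSucc) ⁻¹' {Fin.last n} = {x} := by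
        ext z
        simp only [Set.mem_preimage, Set.mem_singleton_iff]
        by_cases hzx : z = x
        · simp [hzx]
        · simp only [if_neg hzx]
          exact ⟨fun h => absurd h (Fin.castSucc_lt_last (f z)).ne, fun h => absurd h hzx⟩
      rw [this]
      simpa using hc
    · intro j
      have hsub : (fun z => if z = x then Fin.last n else (f z).castSucc) ⁻¹' {j.castSucc}
          ⊆ f ⁻¹' {j} := by
        intro z hz
        simp only [Set.mem_preimage, Set.mem_singleton_iff] at hz ⊢
        by_cases hzx : z = x
        · rw [if_pos hzx] at hz
          exact absurd hz.symm (Fin.castSucc_lt_last j).ne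
        · rw [if_neg hzx] at hz
          exact Fin.castSucc_injective n hz
      exact le_trans (Metric.diam_mono hsub (Set.toFinite _).isBounded) (hfib j)

/-- from an arbitrary map with small fibers we get a surjection with small fibers. -/
lemma exists_surj_of_fibers {c : ℝ} (hc : 0 ≤ c) {n : ℕ} (hn1 : 1 ≤ n)
    (hn : n ≤ Fintype.card X) (g : X → Fin n)
    (hfib : ∀ i, Metric.diam (g ⁻¹' {i}) ≤ c) :
    ∃ f : X → Fin n, Surjective f ∧ ∀ i, Metric.diam (f ⁻¹' {i}) ≤ c := by
  classical
  haveI : Nonempty X := by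
    have : 0 < Fintype.card X := by omega
    exact Fintype.card_pos_iff.mp this
  set R := Set.range g with hR
  haveI : Fintype R := Set.fintypeRange g
  set k := Fintype.card R with hk
  have hkn : k ≤ n := by
    calc k ≤ Fintype.card (Fin n) := Fintype.card_le_of_injective _ Subtype.val_injective
    _ = n := Fintype.card_fin n
  let e : R ≃ Fin k := Fintype.equivFin R
  refine refine_surj hc k n hkn hn ⟨fun x => e ⟨g x, Set.mem_range_self x⟩, ?_, ?_⟩
  · intro i
    obtain ⟨x, hx⟩ := (e.symm i).2
    refine ⟨x, ?_⟩
    have h2 : (⟨g x, Set.mem_range_self x⟩ : R) = e.symm i := Subtype.ext hx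
    have h3 := congrArg e h2
    rw [Equiv.apply_symm_apply] at h3
    exact h3
  · intro i
    have : (fun x => e ⟨g x, Set.mem_range_self x⟩) ⁻¹' {i} = g ⁻¹' {(e.symm i).1} := by
      ext z
      simp only [Set.mem_preimage, Set.mem_singleton_iff]
      constructor
      · intro h
        have : (⟨g z, Set.mem_range_self z⟩ : R) = e.symm i := by
          rw [← h, Equiv.symm_apply_apply]
        exact congrArg Subtype.val this
      · intro h
        have : (⟨g z, Set.mem_range_self z⟩ : R) = e.symm i := Subtype.ext h
        rw [this, Equiv.apply_symm_apply]
    rw [this]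
    exact hfib _
end split

private lemma real_le_of_forall_pos_le_add {a b : ℝ} (h : ∀ ε : ℝ, 0 < ε → a ≤ b + ε) : a ≤ b := by
  by_contra hc
  push_neg at hc
  linarith [h ((a - b) / 2) (by linarith)]


/-- For a nonempty finite metric space `X`, `1 ≤ n ≤ #X` and `l ≥ 0`,
`2 d_GH(lΔₙ, X) = inf_D max {diam D, l − α(D), diam X − l}`, the infimum being taken
over all partitions `D` of `X` into `n` nonempty parts (for `n = 1` the term
`l − α(D)` is absent, following the convention `α(D) = ∞`). -/
theorem two_ghDist_simplex_eq_inf_partitions (X Δ : Type) [MetricSpace X] [Fintype X]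
    [Nonempty X] [MetricSpace Δ] [Fintype Δ] [Nonempty Δ] (n : ℕ) (l : ℝ) (hl : 0 ≤ l)
    (hΔ : IsSimplexOf Δ n l) (hn1 : 1 ≤ n) (hn : n ≤ Fintype.card X) :
    2 * GromovHausdorff.ghDist Δ X =
      sInf {v | ∃ f : X → Fin n, Function.Surjective f ∧
        v = (if 2 ≤ n then
              max (partDiam f) (max (l - partAlpha f) (Metric.diam (Set.univ : Set X) - l))
            else
              max (partDiam f) (Metric.diam (Set.univ : Set X) - l))} := by
  classical
  obtain ⟨hcard, hdistΔ⟩ := hΔ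
  haveI : Nonempty (Fin n) := ⟨⟨0, by omega⟩⟩
  let e : Δ ≃ Fin n := Fintype.equivFinOfCardEq hcard
  set dX := Metric.diam (Set.univ : Set X) with hdX
  set S := {v | ∃ f : X → Fin n, Function.Surjective f ∧
        v = (if 2 ≤ n then max (partDiam f) (max (l - partAlpha f) (dX - l))
            else max (partDiam f) (dX - l))} with hS
  have hSne : S.Nonempty := by
    obtain ⟨f, hf, _⟩ := exists_surj_of_fibers (c := dX) diam_nonneg hn1 hn
      (fun _ => (⟨0, by omega⟩ : Fin n))
      (fun i => Metric.diam_mono (Set.subset_univ _) (Set.toFinite _).isBounded)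
    exact ⟨_, f, hf, rfl⟩
  have hS0 : ∀ v ∈ S, 0 ≤ v := by
    rintro v ⟨f, hf, rfl⟩
    split_ifs <;> exact le_trans (partDiam_nonneg f) (le_max_left _ _)
  have hA : 2 * GromovHausdorff.ghDist Δ X ≤ sInf S := by
    refine le_csInf hSne ?_
    rintro v ⟨f, hf, rfl⟩
    set v := (if 2 ≤ n then max (partDiam f) (max (l - partAlpha f) (dX - l))
            else max (partDiam f) (dX - l)) with hv
    have hvd : partDiam f ≤ v := by
      rw [hv]; split_ifs <;> exact le_max_left _ _
    have hvX : dX - l ≤ v := by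
      rw [hv]; split_ifs
      · exact le_max_of_le_right (le_max_right _ _)
      · exact le_max_right _ _
    have hva : ∀ p q : X, f p ≠ f q → l - dist p q ≤ v := by
      intro p q hpq
      have h2 : 2 ≤ n := by
        by_contra h
        have hn1' : n = 1 := by omega
        subst hn1'
        exact hpq (Subsingleton.elim _ _)
      have h3 : partAlpha f ≤ dist p q :=
        le_trans (partAlpha_le f hpq) (setDist_le rfl rfl)
      have h4 : l - partAlpha f ≤ v := by
        rw [hv, if_pos h2]; exact le_max_of_le_right (le_max_left _ _)
      linarith
    have hv0 : 0 ≤ v := le_trans (partDiam_nonneg f) hvd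
    refine real_le_of_forall_pos_le_add ?_
    intro ε hε
    set Φ : X → Δ := fun x => e.symm (f x) with hΦ
    set ε' := (v + ε) / 2 with hε'
    have hε'0 : 0 < ε' := by rw [hε']; linarith
    have H : ∀ p q : X, |dist (Φ p) (Φ q) - dist ((id : X → X) p) ((id : X → X) q)| ≤ 2 * ε' := by
      intro p q
      have h2ε : 2 * ε' = v + ε := by rw [hε']; ring
      simp only [id]
      by_cases hpq : f p = f q
      · have hΦe : Φ p = Φ q := by rw [hΦ]; simp only [hpq]
        rw [hΦe, dist_self, zero_sub, abs_neg, abs_of_nonneg dist_nonneg]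
        have hle : dist p q ≤ partDiam f :=
          le_trans (Metric.dist_le_diam_of_mem (Set.toFinite _).isBounded
            (show p ∈ f ⁻¹' {f p} from rfl)
            (show q ∈ f ⁻¹' {f p} from hpq.symm)) (le_partDiam f (f p))
        linarith
      · have hΦne : Φ p ≠ Φ q := by
          intro h
          exact hpq (by simpa [hΦ] using congrArg e h)
        rw [hdistΔ _ _ hΦne, abs_sub_le_iff]
        have hle : dist p q ≤ dX :=
          Metric.dist_le_diam_of_mem (Set.toFinite _).isBounded (Set.mem_univ p) (Set.mem_univ q)
        constructor
        · linarith [hva p q hpq]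
        · linarith
    letI : MetricSpace (Δ ⊕ X) := Metric.glueMetricApprox Φ (id : X → X) ε' hε'0 H
    have isoL : Isometry (Sum.inl : Δ → Δ ⊕ X) := Isometry.of_dist_eq fun a b => rfl
    have isoR : Isometry (Sum.inr : X → Δ ⊕ X) := Isometry.of_dist_eq fun a b => rfl
    have hgh : GromovHausdorff.ghDist Δ X ≤
        hausdorffDist (range (Sum.inl : Δ → Δ ⊕ X)) (range (Sum.inr : X → Δ ⊕ X)) :=
      GromovHausdorff.ghDist_le_hausdorffDist isoL isoR
    have hhd : hausdorffDist (range (Sum.inl : Δ → Δ ⊕ X)) (range (Sum.inr : X → Δ ⊕ X)) ≤ ε' := by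
      refine hausdorffDist_le_of_mem_dist hε'0.le ?_ ?_
      · rintro z ⟨a, rfl⟩
        obtain ⟨x, hx⟩ := hf (e a)
        refine ⟨Sum.inr x, mem_range_self _, ?_⟩
        have hax : Φ x = a := by rw [hΦ]; simp only [hx]; exact e.symm_apply_apply a
        have hpt := Metric.glueDist_glued_points Φ (id : X → X) ε' x
        rw [hax] at hpt
        exact le_of_eq hpt
      · rintro z ⟨x, rfl⟩
        refine ⟨Sum.inl (Φ x), mem_range_self _, ?_⟩
        have hpt := Metric.glueDist_glued_points Φ (id : X → X) ε' x
        rw [dist_comm]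
        exact le_of_eq hpt
    calc 2 * GromovHausdorff.ghDist Δ X ≤ 2 * ε' := by linarith [le_trans hgh hhd]
    _ = v + ε := by rw [hε']; ring
  have hB : sInf S ≤ 2 * GromovHausdorff.ghDist Δ X := by
    refine real_le_of_forall_pos_le_add ?_
    intro ε hε
    set r := GromovHausdorff.ghDist Δ X with hr
    set Φ := GromovHausdorff.optimalGHInjl Δ X with hΦ
    set Ψ := GromovHausdorff.optimalGHInjr Δ X with hΨ
    have hΦi := GromovHausdorff.isometry_optimalGHInjl Δ X
    have hΨi := GromovHausdorff.isometry_optimalGHInjr Δ X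
    have hopt : hausdorffDist (range Φ) (range Ψ) = r := GromovHausdorff.hausdorffDist_optimal (X := Δ) (Y := X)
    have hr0 : 0 ≤ r := hopt ▸ hausdorffDist_nonneg
    set ρ := r + ε / 4 with hρ
    have hρ0 : 0 < ρ := by rw [hρ]; linarith
    have hfin : EMetric.hausdorffEdist (range Φ) (range Ψ) ≠ ⊤ :=
      hausdorffEdist_ne_top_of_nonempty_of_bounded (range_nonempty _) (range_nonempty _)
        (Set.finite_range _).isBounded (Set.finite_range _).isBounded
    have hlt : hausdorffDist (range Φ) (range Ψ) < ρ := by rw [hopt, hρ]; linarith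
    have hg : ∀ x : X, ∃ a : Δ, dist (Φ a) (Ψ x) < ρ := by
      intro x
      obtain ⟨y, ⟨a, rfl⟩, hy⟩ := exists_dist_lt_of_hausdorffDist_lt' (mem_range_self x) hlt hfin
      exact ⟨a, hy⟩
    choose g hgd using hg
    have hXd : ∀ p q : X, dist (Ψ p) (Ψ q) = dist p q := fun p q => hΨi.dist_eq p q
    have hΔd : ∀ a b : Δ, dist (Φ a) (Φ b) = dist a b := fun a b => hΦi.dist_eq a b
    have fact1 : ∀ p q : X, g p = g q → dist p q ≤ 2 * ρ := by
      intro p q hpq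
      have e1 : dist (Ψ p) (Φ (g p)) < ρ := lt_of_le_of_lt (le_of_eq (dist_comm _ _)) (hgd p)
      have e2 : dist (Φ (g p)) (Ψ q) < ρ := by rw [hpq]; exact hgd q
      have h := dist_triangle (Ψ p) (Φ (g p)) (Ψ q)
      rw [hXd p q] at h
      linarith
    have fact2 : ∀ p q : X, g p ≠ g q → l - 2 * ρ ≤ dist p q := by
      intro p q hpq
      have e0 : dist (Φ (g p)) (Φ (g q)) = l := by rw [hΔd]; exact hdistΔ _ _ hpq
      have h := dist_triangle4 (Φ (g p)) (Ψ p) (Ψ q) (Φ (g q))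
      rw [e0, hXd p q] at h
      have e1 := hgd p
      have e2 : dist (Ψ q) (Φ (g q)) < ρ := lt_of_le_of_lt (le_of_eq (dist_comm _ _)) (hgd q)
      have e1' : dist (Φ (g p)) (Ψ p) < ρ := e1
      linarith
    have fact3 : dX ≤ l + 2 * ρ := by
      refine Metric.diam_le_of_forall_dist_le (by linarith) ?_
      intro p _ q _
      by_cases hpq : g p = g q
      · linarith [fact1 p q hpq]
      · have e0 : dist (Φ (g p)) (Φ (g q)) = l := by rw [hΔd]; exact hdistΔ _ _ hpq
        have h := dist_triangle4 (Ψ p) (Φ (g p)) (Φ (g q)) (Ψ q)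
        rw [e0, hXd p q] at h
        have e1 : dist (Ψ p) (Φ (g p)) < ρ := lt_of_le_of_lt (le_of_eq (dist_comm _ _)) (hgd p)
        have e2 : dist (Φ (g q)) (Ψ q) < ρ := hgd q
        linarith
    have hfibg : ∀ i : Fin n, Metric.diam ((fun x => e (g x)) ⁻¹' {i}) ≤ 2 * ρ := by
      intro i
      refine Metric.diam_le_of_forall_dist_le (by linarith) ?_
      intro p hp q hq
      simp only [Set.mem_preimage, Set.mem_singleton_iff] at hp hq
      exact fact1 p q (e.injective (hp.trans hq.symm))
    have hex : ∃ f : X → Fin n, Function.Surjective f ∧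
        (∀ i, Metric.diam (f ⁻¹' {i}) ≤ 2 * ρ) ∧ (2 ≤ n → l - partAlpha f ≤ 2 * ρ) := by
      by_cases hgs : Function.Surjective g
      · have hfs : Function.Surjective (fun x => e (g x)) := e.surjective.comp hgs
        refine ⟨fun x => e (g x), hfs, hfibg, ?_⟩
        intro h2
        have hα : l - 2 * ρ ≤ partAlpha (fun x => e (g x)) := by
          refine le_partAlpha h2 ?_
          intro i j hij
          obtain ⟨p, hp⟩ := hfs i
          obtain ⟨q, hq⟩ := hfs j
          refine le_setDist ⟨p, hp⟩ ⟨q, hq⟩ ?_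
          intro p' hp' q' hq'
          simp only [Set.mem_preimage, Set.mem_singleton_iff] at hp' hq'
          refine fact2 p' q' ?_
          intro hgpq
          exact hij (by rw [← hp', ← hq', hgpq])
        linarith
      · rw [Function.Surjective] at hgs
        push_neg at hgs
        obtain ⟨a, ha⟩ := hgs
        have hsmall : l ≤ 2 * ρ := by
          obtain ⟨y, ⟨x, rfl⟩, hy⟩ :=
            exists_dist_lt_of_hausdorffDist_lt (mem_range_self a) hlt hfin
          have hgx : g x ≠ a := ha x
          have e0 : dist (Φ a) (Φ (g x)) = l := by rw [hΔd]; exact hdistΔ _ _ (Ne.symm hgx)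
          have h := dist_triangle (Φ a) (Ψ x) (Φ (g x))
          rw [e0] at h
          have e2 : dist (Ψ x) (Φ (g x)) < ρ := lt_of_le_of_lt (le_of_eq (dist_comm _ _)) (hgd x)
          linarith
        obtain ⟨f, hf, hfib⟩ := exists_surj_of_fibers (c := 2 * ρ) (by linarith) hn1 hn
          (fun x => e (g x)) hfibg
        exact ⟨f, hf, hfib, fun _ => by linarith [partAlpha_nonneg f]⟩
    obtain ⟨f, hf, hfib, hα⟩ := hex
    have hvle : (if 2 ≤ n then max (partDiam f) (max (l - partAlpha f) (dX - l))
        else max (partDiam f) (dX - l)) ≤ 2 * ρ := by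
      have hpd : partDiam f ≤ 2 * ρ := partDiam_le hn1 hfib
      have hXl : dX - l ≤ 2 * ρ := by linarith
      split_ifs with h2
      · exact max_le hpd (max_le (hα h2) hXl)
      · exact max_le hpd hXl
    have hmem : (if 2 ≤ n then max (partDiam f) (max (l - partAlpha f) (dX - l))
        else max (partDiam f) (dX - l)) ∈ S := ⟨f, hf, rfl⟩
    calc sInf S ≤ _ := csInf_le ⟨0, fun v hv => hS0 v hv⟩ hmem
    _ ≤ 2 * ρ := hvle
    _ ≤ 2 * r + ε := by rw [hρ]; linarith
  exact le_antisymm hA hB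
end

section
/- Let X be a finite metric space with m ≥ 2 points and mst-spectrum σ(X) = (σ₁,…,σ_{m−1}) (edge lengths of a minimal spanning tree in descending order). Then for every λ ≥ 2·diam X and every 1 ≤ k ≤ m−1, 2·d_GH(λΔ_{k+1}, X) = λ − σ_k. -/
/-- The multiset of edge lengths of a graph `G` on a finite metric space `V`. -/
noncomputable def edgeLengths {V : Type} [MetricSpace V] [Fintype V] (G : SimpleGraph V) :
    Multiset ℝ :=
  (G.edgeSet.toFinite.toFinset).val.map
    (Sym2.lift ⟨fun x y => dist x y, fun _ _ => dist_comm _ _⟩)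

/-- The length of a graph `G` on a finite metric space: the sum of the lengths of its edges. -/
noncomputable def graphLength {V : Type} [MetricSpace V] [Fintype V] (G : SimpleGraph V) : ℝ :=
  (edgeLengths G).sum

/-- `G` is a minimal spanning tree on the finite metric space `V`: a tree with vertex set `V`
whose length is minimal among all such trees. -/
def IsMST {V : Type} [MetricSpace V] [Fintype V] (G : SimpleGraph V) : Prop :=
  G.IsTree ∧ ∀ H : SimpleGraph V, H.IsTree → graphLength G ≤ graphLength H

lemma List.SortedGE.le_getElem_iff_lt_countP {α : Type*} [LinearOrder α] {l : List α}
    (hl : l.SortedGE) {i : ℕ} (hi : i < l.length) (a : α) :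
    a ≤ l[i] ↔ i < l.countP (a ≤ ·) := by
  constructor
  · intro h
    have htake : (l.take (i + 1)).countP (a ≤ ·) = i + 1 := by
      rw [List.countP_eq_length.2, List.length_take_of_le hi]
      intro x hx
      obtain ⟨j, hj, rfl⟩ := List.mem_take_iff_getElem.1 hx
      simpa using h.trans (hl.getElem_ge_getElem_of_le (by omega))
    have := (List.take_sublist (i + 1) l).countP_le (p := (a ≤ ·))
    omega
  · contrapose!
    intro h
    have hdrop : (l.drop i).countP (a ≤ ·) = 0 := by
      rw [List.countP_eq_zero]
      intro x hx
      obtain ⟨j, hj, rfl⟩ := List.mem_drop_iff_getElem.1 hx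
      simpa using (hl.getElem_ge_getElem_of_le (by omega)).trans_lt h
    rw [← List.take_append_drop i l, List.countP_append, hdrop]
    exact (List.countP_le_length).trans (List.length_take_le _ _)

section Spectrum
variable {α : Type*} [LinearOrder α] {s : Multiset α} {n k : ℕ} {σ : ℕ → α}

lemma Multiset.getElem_sort_eq_of_sort_eq
    (hσ : s.sort (· ≥ ·) = (List.range n).map fun i => σ (i + 1)) (hk1 : 1 ≤ k) (hk : k ≤ n) :
    ∃ h : k - 1 < (s.sort (· ≥ ·)).length, (s.sort (· ≥ ·))[k - 1] = σ k := by
  refine ⟨by simp only [hσ, List.length_map, List.length_range]; omega, ?_⟩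
  simp only [hσ, List.getElem_map, List.getElem_range]
  congr
  omega

lemma Multiset.mem_of_sort_eq
    (hσ : s.sort (· ≥ ·) = (List.range n).map fun i => σ (i + 1)) (hk1 : 1 ≤ k) (hk : k ≤ n) :
    σ k ∈ s := by
  obtain ⟨h, hσk⟩ := getElem_sort_eq_of_sort_eq hσ hk1 hk
  rw [← hσk, ← Multiset.mem_sort (· ≥ ·)]
  exact List.getElem_mem h

lemma Multiset.le_iff_le_countP_of_sort_eq
    (hσ : s.sort (· ≥ ·) = (List.range n).map fun i => σ (i + 1)) (hk1 : 1 ≤ k) (hk : k ≤ n)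
    (a : α) : a ≤ σ k ↔ k ≤ s.countP (a ≤ ·) := by
  obtain ⟨h, hσk⟩ := getElem_sort_eq_of_sort_eq hσ hk1 hk
  rw [← hσk, List.SortedGE.le_getElem_iff_lt_countP (Multiset.pairwise_sort _ _).sortedGE h,
    ← Multiset.coe_countP, Multiset.sort_eq]
  exact (Nat.sub_lt_iff_lt_add hk1).trans Nat.lt_succ_iff

end Spectrum

open Function

namespace SimpleGraph
variable {V : Type*} {G : SimpleGraph V}

lemma reachable_deleteEdges_or_of_reachable {a b u : V} (h : G.Reachable a u) :
    (G.deleteEdges {s(a, b)}).Reachable a u ∨ (G.deleteEdges {s(a, b)}).Reachable b u := by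
  replace h := (reachable_iff_reflTransGen a u).1 h
  induction h with
  | refl => exact .inl .rfl
  | @tail v w _ hvw ih =>
    by_cases he : s(v, w) = s(a, b)
    · rcases Sym2.eq_iff.1 he with ⟨-, rfl⟩ | ⟨-, rfl⟩
      · exact .inr .rfl
      · exact .inl .rfl
    · have hvw' : (G.deleteEdges {s(a, b)}).Adj v w := deleteEdges_adj.2 ⟨hvw, he⟩
      exact ih.imp (·.trans hvw'.reachable) (·.trans hvw'.reachable)

lemma IsAcyclic.not_reachable_deleteEdges_of_mem_edges (hG : G.IsAcyclic) {x y : V}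
    {p : G.Walk x y} (hp : p.IsPath) {e : Sym2 V} (he : e ∈ p.edges) :
    ¬(G.deleteEdges {e}).Reachable x y := by
  classical
  rintro ⟨q⟩
  have hpq := congrArg (fun p : G.Path x y => p.1.edges) <| (hG.subsingleton_path x y).elim
    ⟨p, hp⟩ ⟨q.toPath.1.mapLe (deleteEdges_le _), q.toPath.2.mapLe _⟩
  simp only [Walk.edges_map, Hom.coe_ofLE, Sym2.map_id, List.map_id] at hpq
  rw [hpq] at he
  simpa using (q.toPath : (G.deleteEdges {e}).Walk x y).edges_subset_edgeSet he

lemma IsTree.deleteEdges_sup_edge (hG : G.IsTree) {a b x y : V}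
    (hxy : ¬(G.deleteEdges {s(a, b)}).Reachable x y) :
    (G.deleteEdges {s(a, b)} ⊔ edge x y).IsTree := by
  set H := G.deleteEdges {s(a, b)}
  have hHle : H ≤ H ⊔ edge x y := le_sup_left
  have hne : x ≠ y := by rintro rfl; exact hxy .rfl
  have hxy' : (H ⊔ edge x y).Reachable x y := Adj.reachable (.inr (by simp [edge_adj, hne]))
  have hab : (H ⊔ edge x y).Reachable a b := by
    rcases reachable_deleteEdges_or_of_reachable (b := b) (hG.preconnected a x) with hx | hx <;>
    rcases reachable_deleteEdges_or_of_reachable (b := b) (hG.preconnected a y) with hy | hy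
    · exact absurd (hx.symm.trans hy) hxy
    · exact (hx.mono hHle).trans (hxy'.trans (hy.mono hHle).symm)
    · exact (hy.mono hHle).trans (hxy'.symm.trans (hx.mono hHle).symm)
    · exact absurd (hx.symm.trans hy) hxy
  refine ⟨(connected_iff_exists_forall_reachable _).2 ⟨a, fun u => ?_⟩,
    (hG.isAcyclic.anti (deleteEdges_le _)).sup_edge_of_not_reachable hxy⟩
  rcases reachable_deleteEdges_or_of_reachable (b := b) (hG.preconnected a u) with h | h
  · exact h.mono hHle
  · exact hab.trans (h.mono hHle)

lemma card_connectedComponent_lt_deleteEdges_of_isBridge [Finite V] {e : Sym2 V}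
    (he : e ∈ G.edgeSet) (hbr : G.IsBridge e) :
    Nat.card G.ConnectedComponent < Nat.card (G.deleteEdges {e}).ConnectedComponent := by
  induction e with | h a b =>
  have := Fintype.ofFinite G.ConnectedComponent
  have := Fintype.ofFinite (G.deleteEdges {s(a, b)}).ConnectedComponent
  simp only [Nat.card_eq_fintype_card]
  refine Fintype.card_lt_of_surjective_not_injective _
    (ConnectedComponent.surjective_map_ofLE (deleteEdges_le _)) fun hinj => hbr ?_
  refine ConnectedComponent.exact (hinj ?_)
  simpa using ConnectedComponent.sound (G.mem_edgeSet.1 he).reachable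

lemma IsAcyclic.card_connectedComponent_add_card_le [Finite V] (hG : G.IsAcyclic)
    (S : Finset (Sym2 V)) (hS : ↑S ⊆ G.edgeSet) :
    Nat.card G.ConnectedComponent + S.card ≤ Nat.card (G.deleteEdges S).ConnectedComponent := by
  classical
  induction S using Finset.induction_on with
  | empty => simp
  | @insert e S heS ih =>
    rw [Finset.coe_insert, Set.insert_subset_iff] at hS
    have he : e ∈ (G.deleteEdges S).edgeSet := by simp [hS.1, heS]
    have hbr := isAcyclic_iff_forall_isBridge.1 (hG.anti (deleteEdges_le _)) he
    have hdel : G.deleteEdges ↑(insert e S) = (G.deleteEdges S).deleteEdges {e} := by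
      rw [deleteEdges_deleteEdges, Finset.coe_insert, Set.insert_eq, Set.union_comm]
    rw [hdel, Finset.card_insert_of_notMem heS]
    have := card_connectedComponent_lt_deleteEdges_of_isBridge he hbr
    have := ih hS.2
    omega

/-- The image of `G` under `c` is a connected graph on `W` all of whose edges come from `F`. -/
lemma Connected.card_le_card_add_one_of_surjective {W : Type*} (hG : G.Connected) {c : V → W}
    (hc : Surjective c) (F : Finset (Sym2 V))
    (hF : ∀ u v, G.Adj u v → c u ≠ c v → s(u, v) ∈ F) :
    Nat.card W ≤ F.card + 1 := by
  set Q := fromEdgeSet (Sym2.map c '' F)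
  have hQ : Q.Connected := by
    have := hG.nonempty.map c
    refine ⟨fun w w' => ?_⟩
    obtain ⟨⟨u, rfl⟩, ⟨u', rfl⟩⟩ := And.intro (hc w) (hc w')
    refine (reachable_iff_reflTransGen _ _).2 <| Relation.ReflTransGen.lift' c (fun u v huv => ?_)
      _ _ ((reachable_iff_reflTransGen _ _).1 (hG.preconnected u u'))
    by_cases h : c u = c v
    · simp [Function.onFun, h, Relation.ReflTransGen.refl]
    · exact .single ⟨⟨s(u, v), hF u v huv h, rfl⟩, by simpa using h⟩
  calc Nat.card W ≤ Nat.card Q.edgeSet + 1 := hQ.card_vert_le_card_edgeSet_add_one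
    _ ≤ F.card + 1 := by
      rw [Nat.card_coe_set_eq, ← Set.ncard_coe_finset F, add_le_add_iff_right]
      refine (Set.ncard_le_ncard ?_ (F.finite_toSet.image (Sym2.map c))).trans
        (Set.ncard_image_le F.finite_toSet)
      simp [Q, edgeSet_fromEdgeSet]

lemma exists_surjective_forall_ne_not_reachable [Finite V] {W : Type*} [Finite W] [Nonempty W]
    (h : Nat.card W ≤ Nat.card G.ConnectedComponent) :
    ∃ c : V → W, Surjective c ∧ ∀ u v, c u ≠ c v → ¬G.Reachable u v := by
  have := Fintype.ofFinite G.ConnectedComponent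
  have := Fintype.ofFinite W
  rw [Nat.card_eq_fintype_card, Nat.card_eq_fintype_card] at h
  obtain ⟨ι⟩ := Function.Embedding.nonempty_of_card_le h
  refine ⟨invFun ι ∘ G.connectedComponentMk, (invFun_surjective ι.injective).comp
    (fun C => C.exists_rep), fun u v huv hr => huv ?_⟩
  simp [ConnectedComponent.sound hr]

end SimpleGraph

open scoped Finset

noncomputable def sym2Dist {X : Type*} [PseudoMetricSpace X] : Sym2 X → ℝ :=
  Sym2.lift ⟨fun x y => dist x y, fun _ _ => dist_comm _ _⟩

@[simp] lemma sym2Dist_mk {X : Type*} [PseudoMetricSpace X] (x y : X) :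
    sym2Dist s(x, y) = dist x y := rfl

section MST
variable {X : Type} [MetricSpace X] [Fintype X]

lemma exists_dist_eq_of_mem_edgeLengths {G : SimpleGraph X} {t : ℝ} (ht : t ∈ edgeLengths G) :
    ∃ x y : X, dist x y = t := by
  obtain ⟨e, -, rfl⟩ := Multiset.mem_map.1 ht
  induction e with | h x y => exact ⟨x, y, rfl⟩

lemma countP_edgeLengths (G : SimpleGraph X) (p : ℝ → Prop) [DecidablePred p] :
    (edgeLengths G).countP p = #{e ∈ G.edgeSet.toFinite.toFinset | p (sym2Dist e)} := by
  rw [edgeLengths, Multiset.countP_map, Finset.card_def, Finset.filter_val]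
  rfl

lemma graphLength_eq_finsum (G : SimpleGraph X) :
    graphLength G = ∑ᶠ e ∈ G.edgeSet, sym2Dist e :=
  (finsum_mem_eq_finite_toFinset_sum _ _).symm

lemma graphLength_of_edgeSet_eq_insert {G H : SimpleGraph X} {e : Sym2 X}
    (h : G.edgeSet = insert e H.edgeSet) (he : e ∉ H.edgeSet) :
    graphLength G = sym2Dist e + graphLength H := by
  rw [graphLength_eq_finsum, graphLength_eq_finsum, h, finsum_mem_insert _ he H.edgeSet.toFinite]

/-- The cut property: exchanging `s(a, b)` for `s(x, y)` gives another spanning tree. -/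
lemma IsMST.dist_le_of_not_reachable_deleteEdges {T : SimpleGraph X} (hT : IsMST T) {a b x y : X}
    (hab : T.Adj a b) (hxy : ¬(T.deleteEdges {s(a, b)}).Reachable x y) :
    dist a b ≤ dist x y := by
  set H := T.deleteEdges {s(a, b)}
  have hne : x ≠ y := by rintro rfl; exact hxy .rfl
  have hT_len : graphLength T = dist a b + graphLength H :=
    graphLength_of_edgeSet_eq_insert (e := s(a, b))
      (by rw [SimpleGraph.edgeSet_deleteEdges, Set.insert_sdiff_singleton,
        Set.insert_eq_of_mem (T.mem_edgeSet.2 hab)])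
      (by simp [H])
  have hT'_len : graphLength (H ⊔ SimpleGraph.edge x y) = dist x y + graphLength H :=
    graphLength_of_edgeSet_eq_insert (e := s(x, y))
      (by rw [SimpleGraph.edgeSet_sup, SimpleGraph.edgeSet_edge_of_ne hne, Set.union_singleton])
      (fun h => hxy (H.mem_edgeSet.1 h).reachable)
  linarith [hT.2 _ (hT.1.deleteEdges_sup_edge hxy)]

lemma IsMST.le_dist_of_not_reachable_deleteEdges {T : SimpleGraph X} (hT : IsMST T)
    {S : Set (Sym2 X)} {δ : ℝ} (hS : ∀ e ∈ S, δ ≤ sym2Dist e) {x y : X}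
    (hxy : ¬(T.deleteEdges S).Reachable x y) : δ ≤ dist x y := by
  obtain ⟨p, hp⟩ := (hT.1.preconnected x y).exists_isPath
  obtain ⟨e, heS, hep⟩ := p.exists_mem_edges_of_not_reachable_deleteEdges hxy
  induction e with | h a b =>
  exact (hS _ heS).trans <| hT.dist_le_of_not_reachable_deleteEdges (p.adj_of_mem_edges hep)
    (hT.1.isAcyclic.not_reachable_deleteEdges_of_mem_edges hp hep)

lemma IsMST.exists_surjective_forall_ne_le_dist {T : SimpleGraph X} (hT : IsMST T)
    {W : Type*} [Finite W] [Nonempty W] {δ : ℝ}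
    (hW : Nat.card W ≤ (edgeLengths T).countP (δ ≤ ·) + 1) :
    ∃ c : X → W, Surjective c ∧ ∀ x y, c x ≠ c y → δ ≤ dist x y := by
  classical
  set S := {e ∈ T.edgeSet.toFinite.toFinset | δ ≤ sym2Dist e}
  have hS : ↑S ⊆ T.edgeSet := fun e he => by simp_all [S]
  have := hT.1.nonempty
  have hcard := hT.1.isAcyclic.card_connectedComponent_add_card_le S hS
  have hW' : Nat.card W ≤ S.card + 1 := by rwa [countP_edgeLengths] at hW
  have := Nat.card_pos (α := T.ConnectedComponent)
  obtain ⟨c, hc, hsep⟩ :=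
    SimpleGraph.exists_surjective_forall_ne_not_reachable (G := T.deleteEdges S) (W := W)
      (by omega)
  exact ⟨c, hc, fun x y hxy => hT.le_dist_of_not_reachable_deleteEdges
    (fun e he => (Finset.mem_filter.1 he).2) (hsep x y hxy)⟩

lemma card_le_countP_edgeLengths_add_one {T : SimpleGraph X} (hT : T.Connected)
    {W : Type*} {c : X → W} (hc : Surjective c) {δ : ℝ}
    (hsep : ∀ x y, c x ≠ c y → δ ≤ dist x y) :
    Nat.card W ≤ (edgeLengths T).countP (δ ≤ ·) + 1 := by
  classical
  rw [countP_edgeLengths]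
  exact hT.card_le_card_add_one_of_surjective hc _ fun u v huv h =>
    Finset.mem_filter.2 ⟨by simpa using huv, hsep u v h⟩

end MST

lemma Metric.exists_dist_le_hausdorffDist {α : Type*} [PseudoMetricSpace α] {s t : Set α}
    (hs : IsCompact s) (ht : IsCompact t) (hsne : s.Nonempty) (htne : t.Nonempty) {x : α}
    (hx : x ∈ s) : ∃ y ∈ t, dist x y ≤ Metric.hausdorffDist s t := by
  obtain ⟨y, hy, hxy⟩ := ht.exists_infDist_eq_dist htne x
  exact ⟨y, hy, hxy ▸ Metric.infDist_le_hausdorffDist_of_mem hx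
    (Metric.hausdorffEDist_ne_top_of_nonempty_of_bounded hsne htne hs.isBounded ht.isBounded)⟩

namespace GromovHausdorff

variable {X Y : Type*} [MetricSpace X] [CompactSpace X] [Nonempty X]
  [MetricSpace Y] [CompactSpace Y] [Nonempty Y]

lemma ghDist_comm : ghDist X Y = ghDist Y X := dist_comm _ _

lemma ghDist_le_of_surjective {f : X → Y} (hf : Surjective f) {ε : ℝ}
    (h : ∀ x x', |dist x x' - dist (f x) (f x')| ≤ ε) : ghDist X Y ≤ ε / 2 := by
  simpa using ghDist_le_of_approx_subsets (s := Set.univ) (fun x => f x) (ε₁ := 0) (ε₃ := 0)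
    (fun x => ⟨x, trivial, by simp⟩)
    (fun y => ⟨⟨(hf y).choose, trivial⟩, by simp [(hf y).choose_spec]⟩) (fun x x' => h x x')

variable (X Y) in
lemma exists_correspondence_dist_le_add_two_ghDist :
    ∃ R : X → Y → Prop, (∀ x, ∃ y, R x y) ∧ (∀ y, ∃ x, R x y) ∧
      ∀ x x' y y', R x y → R x' y' → dist x x' ≤ dist y y' + 2 * ghDist X Y := by
  set Φ := optimalGHInjl X Y
  set Ψ := optimalGHInjr X Y
  have hΦ : Isometry Φ := isometry_optimalGHInjl X Y
  have hΨ : Isometry Ψ := isometry_optimalGHInjr X Y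
  have hH := hausdorffDist_optimal (X := X) (Y := Y)
  have hcΦ := isCompact_range hΦ.continuous
  have hcΨ := isCompact_range hΨ.continuous
  refine ⟨fun x y => dist (Φ x) (Ψ y) ≤ ghDist X Y, fun x => ?_, fun y => ?_, ?_⟩
  · obtain ⟨_, ⟨y, rfl⟩, h⟩ := Metric.exists_dist_le_hausdorffDist hcΦ hcΨ
      (Set.range_nonempty _) (Set.range_nonempty _) (Set.mem_range_self x)
    exact ⟨y, hH ▸ h⟩
  · obtain ⟨_, ⟨x, rfl⟩, h⟩ := Metric.exists_dist_le_hausdorffDist hcΨ hcΦ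
      (Set.range_nonempty _) (Set.range_nonempty _) (Set.mem_range_self y)
    refine ⟨x, ?_⟩
    rwa [dist_comm, Metric.hausdorffDist_comm, hH] at h
  · intro x x' y y' h h'
    rw [← hΦ.dist_eq, ← hΨ.dist_eq]
    linarith [dist_triangle4 (Φ x) (Ψ y) (Ψ y') (Φ x'), dist_comm (Ψ y') (Φ x')]

lemma two_ghDist_le_sub_of_surjective {l δ : ℝ} (hX : ∀ x x' : X, x ≠ x' → dist x x' = l)
    (hl : 2 * Metric.diam (Set.univ : Set Y) ≤ l) {c : Y → X} (hc : Surjective c)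
    (hsep : ∀ y y', c y ≠ c y' → δ ≤ dist y y') (hδ : δ ≤ Metric.diam (Set.univ : Set Y)) :
    2 * ghDist X Y ≤ l - δ := by
  have hdist (y y' : Y) : dist y y' ≤ Metric.diam (Set.univ : Set Y) :=
    Metric.dist_le_diam_of_mem isCompact_univ.isBounded trivial trivial
  have hdiam : 0 ≤ Metric.diam (Set.univ : Set Y) := Metric.diam_nonneg
  have hdistortion (y y' : Y) : |dist y y' - dist (c y) (c y')| ≤ l - δ := by
    by_cases hyy' : c y = c y'
    · rw [hyy', dist_self, sub_zero, abs_of_nonneg dist_nonneg]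
      linarith [hdist y y']
    · rw [hX _ _ hyy', abs_of_nonpos (by linarith [hdist y y'])]
      linarith [hsep y y' hyy']
  rw [ghDist_comm]
  linarith [ghDist_le_of_surjective hc hdistortion]

lemma exists_surjective_forall_ne_le_dist_of_two_ghDist_lt {l : ℝ}
    (hX : ∀ x x' : X, x ≠ x' → dist x x' = l) (hl : 2 * ghDist X Y < l) :
    ∃ c : Y → X, Surjective c ∧
      ∀ y y', c y ≠ c y' → l - 2 * ghDist X Y ≤ dist y y' := by
  obtain ⟨R, hRl, hRr, hR⟩ := exists_correspondence_dist_le_add_two_ghDist X Y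
  choose c hc using hRr
  have hc_eq : ∀ x y, R x y → c y = x := fun x y h => by_contra fun hne => by
    have := hR _ _ _ _ (hc y) h
    rw [hX _ _ hne, dist_self] at this
    linarith
  refine ⟨c, fun x => (hRl x).imp fun y => hc_eq x y, fun y y' hyy' => ?_⟩
  have := hR _ _ _ _ (hc y) (hc y')
  rw [hX _ _ hyy'] at this
  linarith

end GromovHausdorff

theorem two_ghDist_simplex_eq_sub_mst_spectrum_general (X : Type) [MetricSpace X] [Fintype X] [Nonempty X]
    (T : SimpleGraph X) (hT : IsMST T) (σ : ℕ → ℝ)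
    (hσ : (edgeLengths T).sort (· ≥ ·) =
      (List.range (Fintype.card X - 1)).map (fun i => σ (i + 1)))
    (l : ℝ) (hl : 2 * Metric.diam (Set.univ : Set X) ≤ l)
    (k : ℕ) (hk1 : 1 ≤ k) (hk : k ≤ Fintype.card X - 1)
    (Δ : Type) [MetricSpace Δ] [Fintype Δ] [Nonempty Δ] (hΔ : IsSimplexOf Δ (k + 1) l) :
    2 * GromovHausdorff.ghDist Δ X = l - σ k := by
  have hspectrum := Multiset.le_iff_le_countP_of_sort_eq hσ hk1 hk
  obtain ⟨a, b, hab⟩ := exists_dist_eq_of_mem_edgeLengths (Multiset.mem_of_sort_eq hσ hk1 hk)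
  have hcardΔ : Nat.card Δ = k + 1 := Nat.card_eq_fintype_card.trans hΔ.1
  have upper : 2 * GromovHausdorff.ghDist Δ X ≤ l - σ k := by
    obtain ⟨c, hc, hsep⟩ := hT.exists_surjective_forall_ne_le_dist (W := Δ) (δ := σ k)
      (by rw [hcardΔ]; have := (hspectrum _).1 le_rfl; omega)
    exact GromovHausdorff.two_ghDist_le_sub_of_surjective hΔ.2 hl hc hsep
      (hab ▸ Metric.dist_le_diam_of_mem Set.finite_univ.isBounded trivial trivial)
  have lower : l - σ k ≤ 2 * GromovHausdorff.ghDist Δ X := by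
    by_contra! h
    obtain ⟨c, hc, hsep⟩ :=
      GromovHausdorff.exists_surjective_forall_ne_le_dist_of_two_ghDist_lt hΔ.2
        (by linarith [hab ▸ dist_nonneg])
    have := card_le_countP_edgeLengths_add_one hT.1.connected hc hsep
    linarith [(hspectrum (l - 2 * GromovHausdorff.ghDist Δ X)).2 (by omega)]
  linarith

/-- Let `X` be a finite metric space with `m ≥ 2` points and mst-spectrum
`σ₁ ≥ … ≥ σ_{m−1}` (the descending vector of edge lengths of a minimal spanning tree).
Then for every `l ≥ 2 diam X` and every `1 ≤ k ≤ m − 1`,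
`2 d_GH(lΔ_{k+1}, X) = l − σ_k`. -/
theorem two_ghDist_simplex_eq_sub_mst_spectrum (X : Type) [MetricSpace X] [Fintype X] [Nonempty X]
    (hm : 2 ≤ Fintype.card X) (T : SimpleGraph X) (hT : IsMST T) (σ : ℕ → ℝ)
    (hσ : (edgeLengths T).sort (· ≥ ·) =
      (List.range (Fintype.card X - 1)).map (fun i => σ (i + 1)))
    (l : ℝ) (hl : 2 * Metric.diam (Set.univ : Set X) ≤ l)
    (k : ℕ) (hk1 : 1 ≤ k) (hk : k ≤ Fintype.card X - 1)
    (Δ : Type) [MetricSpace Δ] [Fintype Δ] [Nonempty Δ] (hΔ : IsSimplexOf Δ (k + 1) l) :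
    2 * GromovHausdorff.ghDist Δ X = l - σ k :=
  two_ghDist_simplex_eq_sub_mst_spectrum_general X T hT σ hσ l hl k hk1 hk Δ hΔ
end

section
/- Let X be a bounded metric space, n ≤ #X a cardinal, and 0 < λ < diam X. Then X admits a partition into n parts of strictly smaller diameter (i.e., there exist ε > 0 and a partition {X_i} of X into n nonempty parts with diam X_i ≤ diam X − ε for all i) if and only if 2·d_GH(λΔₙ, X) < diam X. -/
open Function Metric Set GromovHausdorff Bornology


/-- Combinatorial lemma: any map to `Fin n` from a finite type of cardinality `≥ n` can be
refined to a surjection whose fibers are singletons or subsets of the original fibers. -/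
lemma exists_surj_refine {α : Type*} [Fintype α] [DecidableEq α] {n : ℕ} (hn : n ≤ Fintype.card α) :
    ∀ k (f : α → Fin n),
      (Finset.univ.filter (fun i => ∀ x, f x ≠ i)).card = k →
      ∃ g : α → Fin n, Surjective g ∧ ∀ x y, g x = g y → x = y ∨ f x = f y := by
  intro k
  induction k with
  | zero =>
    intro f hf
    refine ⟨f, fun i => ?_, fun x y h => Or.inr h⟩
    by_contra h
    push_neg at h
    have : i ∈ Finset.univ.filter (fun i => ∀ x, f x ≠ i) := by
      simp only [Finset.mem_filter, Finset.mem_univ, true_and]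
      exact fun x hx => h x hx
    rw [Finset.card_eq_zero] at hf
    simp [hf] at this
  | succ k ih =>
    intro f hf
    -- there is a missing value i₀
    obtain ⟨i₀, hi₀⟩ : ∃ i₀, i₀ ∈ Finset.univ.filter (fun i => ∀ x, f x ≠ i) :=
      Finset.card_pos.1 (hf ▸ k.succ_pos)
    simp only [Finset.mem_filter, Finset.mem_univ, true_and] at hi₀
    -- f is not injective
    have hninj : ¬ Injective f := by
      intro hinj
      have hcard : Fintype.card α = n := le_antisymm
        (by simpa using Fintype.card_le_of_injective f hinj) hn
      have hsurj : Surjective f := by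
        have : Bijective f := (Fintype.bijective_iff_injective_and_card f).2
          ⟨hinj, by simp [hcard]⟩
        exact this.2
      obtain ⟨x, hx⟩ := hsurj i₀
      exact hi₀ x hx
    rw [not_injective_iff] at hninj
    obtain ⟨x₀, y₀, hfxy, hxy⟩ := hninj
    set f' := Function.update f x₀ i₀ with hf'
    have hx₀ : f' x₀ = i₀ := Function.update_self _ _ _
    have hother : ∀ x, x ≠ x₀ → f' x = f x := fun x hx => Function.update_of_ne hx _ _
    -- the missing set of f' is that of f minus i₀
    have hmiss : (Finset.univ.filter (fun i => ∀ x, f' x ≠ i)) =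
        (Finset.univ.filter (fun i => ∀ x, f x ≠ i)).erase i₀ := by
      ext i
      simp only [Finset.mem_filter, Finset.mem_univ, true_and, Finset.mem_erase]
      constructor
      · intro h
        have hne : i ≠ i₀ := by
          intro h'
          exact h x₀ (h' ▸ hx₀)
        refine ⟨hne, fun x hx => ?_⟩
        by_cases hxx : x = x₀
        · subst hxx
          exact h y₀ (by rw [hother y₀ (Ne.symm hxy), ← hfxy, hx])
        · exact h x (by rw [hother x hxx, hx])
      · rintro ⟨hne, h⟩ x hx
        by_cases hxx : x = x₀
        · subst hxx
          rw [hx₀] at hx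
          exact hne hx.symm
        · rw [hother x hxx] at hx
          exact h x hx
    have hcard' : (Finset.univ.filter (fun i => ∀ x, f' x ≠ i)).card = k := by
      have hmem : i₀ ∈ Finset.univ.filter (fun i => ∀ x, f x ≠ i) := by
        simp only [Finset.mem_filter, Finset.mem_univ, true_and]; exact hi₀
      rw [hmiss, Finset.card_erase_of_mem hmem, hf]; omega
    obtain ⟨g, hgsurj, hg⟩ := ih f' hcard'
    refine ⟨g, hgsurj, fun x y h => ?_⟩
    rcases hg x y h with h' | h'
    · exact Or.inl h'
    · -- f' x = f' y → x = y ∨ f x = f y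
      by_cases hxx : x = x₀
      · by_cases hyy : y = x₀
        · exact Or.inl (hxx.trans hyy.symm)
        · subst hxx
          rw [hx₀, hother y hyy] at h'
          exact absurd h'.symm (hi₀ y)
      · by_cases hyy : y = x₀
        · subst hyy
          rw [hother x hxx, hx₀] at h'
          exact absurd h' (hi₀ x)
        · rw [hother x hxx, hother y hyy] at h'
          exact Or.inr h'


/-- Generalized Borsuk problem: a bounded (here: nonempty finite) metric space `X`
admits a partition into `n` parts of strictly smaller diameter if and only if
`2 d_GH(lΔₙ, X) < diam X`, where `0 < l < diam X`. -/
theorem borsuk_partition_iff_ghDist (X Δ : Type) [MetricSpace X] [Fintype X] [Nonempty X]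
    [MetricSpace Δ] [Fintype Δ] [Nonempty Δ] (n : ℕ) (hn1 : 1 ≤ n)
    (hn : n ≤ Fintype.card X) (l : ℝ) (hl0 : 0 < l)
    (hl : l < Metric.diam (Set.univ : Set X)) (hΔ : IsSimplexOf Δ n l) :
    (∃ ε > 0, ∃ f : X → Fin n, Function.Surjective f ∧
        ∀ i : Fin n, Metric.diam (f ⁻¹' {i}) ≤ Metric.diam (Set.univ : Set X) - ε) ↔
      2 * GromovHausdorff.ghDist Δ X < Metric.diam (Set.univ : Set X) := by
  obtain ⟨hΔcard, hΔdist⟩ := hΔ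
  constructor
  · rintro ⟨ε', hε', f, hfs, hfd⟩
    set D := Metric.diam (Set.univ : Set X) with hD
    have hD0 : 0 < D := lt_trans hl0 hl
    have hbX : IsBounded (Set.univ : Set X) := Set.finite_univ.isBounded
    set m : ℝ := max (max (D - ε') l) (D - l) with hm
    have hm0 : 0 < m := lt_of_lt_of_le (by linarith : (0:ℝ) < D - l) (le_max_right _ _)
    have hmD : m < D := by
      apply max_lt (max_lt (by linarith) hl) (by linarith)
    set ε := m / 2 with hε
    have hε0 : 0 < ε := by positivity
    let e : Δ ≃ Fin n := Fintype.equivFinOfCardEq hΔcard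
    let Φ : X → Δ := fun x => e.symm (f x)
    let Ψ : X → X := id
    have H : ∀ p q : X, |dist (Φ p) (Φ q) - dist (Ψ p) (Ψ q)| ≤ 2 * ε := by
      intro p q
      have h2ε : 2 * ε = m := by rw [hε]; ring
      rw [h2ε]
      have hpq : dist p q ≤ D := dist_le_diam_of_mem hbX (mem_univ p) (mem_univ q)
      by_cases h : f p = f q
      · have : Φ p = Φ q := by simp only [Φ, h]
        rw [this, dist_self]
        have hp : p ∈ f ⁻¹' {f p} := rfl
        have hq : q ∈ f ⁻¹' {f p} := by simp [Set.mem_preimage, h]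
        have := dist_le_diam_of_mem ((Set.toFinite _).isBounded) hp hq
        have h2 := hfd (f p)
        have : dist p q ≤ D - ε' := le_trans this h2
        rw [abs_sub_comm, abs_of_nonneg (by simpa using dist_nonneg)]
        simp only [Ψ, id]
        exact le_trans (by simpa using this) (le_trans (le_max_left _ _) (le_max_left _ _))
      · have hne : Φ p ≠ Φ q := fun hc => h (by
          have := congrArg e hc
          simpa [Φ] using this)
        rw [hΔdist _ _ hne]
        simp only [Ψ, id]
        rw [abs_sub_le_iff]
        constructor
        · have : l ≤ m := le_trans (le_max_right _ _) (le_max_left _ _)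
          have := dist_nonneg (x := p) (y := q)
          linarith
        · have : D - l ≤ m := le_max_right _ _
          linarith
    letI : MetricSpace (Δ ⊕ X) := glueMetricApprox Φ Ψ ε hε0 H
    have Il : Isometry (Sum.inl : Δ → Δ ⊕ X) := Isometry.of_dist_eq fun x y => rfl
    have Ir : Isometry (Sum.inr : X → Δ ⊕ X) := Isometry.of_dist_eq fun x y => rfl
    have hGH : ghDist Δ X ≤ hausdorffDist (range (Sum.inl : Δ → Δ ⊕ X))
        (range (Sum.inr : X → Δ ⊕ X)) := ghDist_le_hausdorffDist Il Ir
    have hHD : hausdorffDist (range (Sum.inl : Δ → Δ ⊕ X))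
        (range (Sum.inr : X → Δ ⊕ X)) ≤ ε := by
      apply hausdorffDist_le_of_mem_dist hε0.le
      · rintro a ⟨δ, rfl⟩
        obtain ⟨x, hx⟩ := hfs (e δ)
        have hδ : Φ x = δ := by simp [Φ, hx]
        refine ⟨Sum.inr x, mem_range_self _, ?_⟩
        have := glueDist_glued_points Φ Ψ ε x
        rw [hδ] at this
        exact le_of_eq this
      · rintro a ⟨x, rfl⟩
        refine ⟨Sum.inl (Φ x), mem_range_self _, ?_⟩
        rw [dist_comm]
        exact le_of_eq (glueDist_glued_points Φ Ψ ε x)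
    calc 2 * ghDist Δ X ≤ 2 * ε := by linarith [le_trans hGH hHD]
      _ = m := by rw [hε]; ring
      _ < D := hmD

  · intro hgh
    classical
    set D := Metric.diam (Set.univ : Set X) with hD
    set r := GromovHausdorff.ghDist Δ X with hr
    set Φo := optimalGHInjl Δ X
    set Ψo := optimalGHInjr Δ X
    have hopt : hausdorffDist (range Φo) (range Ψo) = r := hausdorffDist_optimal
    have hr0 : 0 ≤ r := hopt ▸ hausdorffDist_nonneg
    set c := r + (D - 2 * r) / 4 with hc
    have hrc : r < c := by rw [hc]; linarith
    have h2c : 2 * c < D := by rw [hc]; linarith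
    have hc0 : 0 < c := lt_of_le_of_lt hr0 hrc
    have hne : EMetric.hausdorffEdist (range Φo) (range Ψo) ≠ ⊤ :=
      hausdorffEdist_ne_top_of_nonempty_of_bounded (range_nonempty _) (range_nonempty _)
        ((isCompact_range (isometry_optimalGHInjl Δ X).continuous).isBounded)
        ((isCompact_range (isometry_optimalGHInjr Δ X).continuous).isBounded)
    have hx : ∀ x : X, ∃ δ : Δ, dist (Ψo x) (Φo δ) < c := by
      intro x
      obtain ⟨y, ⟨δ, rfl⟩, hy⟩ := exists_dist_lt_of_hausdorffDist_lt' (mem_range_self x)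
        (hopt ▸ hrc) hne
      exact ⟨δ, by rwa [dist_comm]⟩
    choose g hg using hx
    let e : Δ ≃ Fin n := Fintype.equivFinOfCardEq hΔcard
    let f₀ : X → Fin n := fun x => e (g x)
    obtain ⟨f, hfs, hf⟩ := exists_surj_refine hn _ f₀ rfl
    refine ⟨D - 2 * c, by linarith, f, hfs, fun i => ?_⟩
    have hdd : ∀ x y : X, f x = f y → dist x y ≤ 2 * c := by
      intro x y hxy
      rcases hf x y hxy with h | h
      · subst h; simp only [dist_self]; linarith
      · have hgxy : g x = g y := e.injective h
        have h1 : dist x y = dist (Ψo x) (Ψo y) := ((isometry_optimalGHInjr Δ X).dist_eq x y).symm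
        have h2 := hg x
        have h3 := hg y
        rw [hgxy] at h2
        calc dist x y ≤ dist (Ψo x) (Φo (g y)) + dist (Φo (g y)) (Ψo y) := by
              rw [h1]; exact dist_triangle _ _ _
          _ ≤ c + c := add_le_add h2.le (by rw [dist_comm]; exact h3.le)
          _ = 2 * c := by ring
    have : Metric.diam (f ⁻¹' {i}) ≤ 2 * c := by
      apply diam_le_of_forall_dist_le (by linarith)
      intro x hx' y hy'
      exact hdd x y (by simp only [Set.mem_preimage, Set.mem_singleton_iff] at hx' hy'; rw [hx', hy'])
    linarith
end

section
/- Let X = [0,1] with the standard metric and let Z be a connected metric space with diam Z ≤ 1/2. Let Y = X × Z with the max-metric d((x₁,z₁),(x₂,z₂)) = max{|x₁ − x₂|, d_Z(z₁,z₂)}. Then d_GH(λΔₙ, X) = d_GH(λΔₙ, Y) for every cardinal/natural number n ≥ 1 and every λ ≥ 0. -/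
open Metric Set GromovHausdorff
set_option linter.unusedSectionVars false

section Upper

variable {A W : Type} [MetricSpace A] [MetricSpace W] [Nonempty W]

/-- cross distance between a point of `A` and a point of `W`, given `g : W → A`. -/
noncomputable def crossD (g : W → A) (D : ℝ) (a : A) (w : W) : ℝ :=
  (⨅ w' : W, (dist a (g w') + dist w' w)) + D / 2

lemma crossD_bdd (g : W → A) (a : A) (w : W) :
    BddBelow (range fun w' : W => dist a (g w') + dist w' w) :=
  ⟨0, by rintro x ⟨w', rfl⟩; positivity⟩

lemma crossD_le (g : W → A) (D : ℝ) (a : A) (w w' : W) :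
    crossD g D a w ≤ dist a (g w') + dist w' w + D / 2 := by
  have := ciInf_le (crossD_bdd g a w) w'
  unfold crossD; linarith [this]

lemma le_crossD (g : W → A) (D : ℝ) (a : A) (w : W) {c : ℝ}
    (h : ∀ w' : W, c ≤ dist a (g w') + dist w' w + D / 2) :
    c ≤ crossD g D a w := by
  have : c - D/2 ≤ ⨅ w' : W, (dist a (g w') + dist w' w) :=
    le_ciInf fun w' => by linarith [h w']
  unfold crossD; linarith

lemma crossD_nonneg (g : W → A) {D : ℝ} (hD : 0 ≤ D) (a : A) (w : W) :
    D / 2 ≤ crossD g D a w :=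
  le_crossD g D a w fun w' => by have := dist_nonneg (x := a) (y := g w'); have := dist_nonneg (x := w') (y := w); linarith

end Upper

section Upper2

variable {A W : Type} [MetricSpace A] [MetricSpace W] [Nonempty W]

/-- distance on the disjoint union -/
noncomputable def sumD (g : W → A) (D : ℝ) : A ⊕ W → A ⊕ W → ℝ
  | Sum.inl a, Sum.inl a' => dist a a'
  | Sum.inl a, Sum.inr w => crossD g D a w
  | Sum.inr w, Sum.inl a => crossD g D a w
  | Sum.inr w, Sum.inr w' => dist w w'

variable (g : W → A) {D : ℝ} (hD : 0 < D)
  (hg : ∀ w w', |dist (g w) (g w') - dist w w'| ≤ D)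

lemma crossD_tri1 (a a' : A) (w : W) :
    crossD g D a w ≤ dist a a' + crossD g D a' w := by
  rw [← sub_le_iff_le_add']
  apply le_crossD
  intro w'
  have h1 := crossD_le g D a w w'
  have h2 := dist_triangle a a' (g w')
  linarith

lemma crossD_tri2 (a : A) (w w'' : W) :
    crossD g D a w ≤ crossD g D a w'' + dist w'' w := by
  rw [← sub_le_iff_le_add]
  apply le_crossD
  intro w'
  have h1 := crossD_le g D a w w'
  have h2 := dist_triangle w' w'' w
  linarith

include hg in
lemma crossD_tri3 (a a' : A) (w : W) :
    dist a a' ≤ crossD g D a w + crossD g D a' w := by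
  rw [← sub_le_iff_le_add']
  apply le_crossD
  intro w1
  rw [sub_le_iff_le_add', ← sub_le_iff_le_add]
  apply le_crossD
  intro w2
  have h1 := dist_triangle a (g w2) a'
  have h2 := dist_triangle (g w2) (g w1) a'
  have h3 := abs_le.1 (hg w2 w1)
  have h4 := dist_triangle w2 w w1
  have c1 := dist_comm w w1
  have c2 := dist_comm (g w1) a'
  linarith

include hg in
lemma crossD_tri4 (a : A) (w w' : W) :
    dist w w' ≤ crossD g D a w + crossD g D a w' := by
  rw [← sub_le_iff_le_add']
  apply le_crossD
  intro w1
  rw [sub_le_iff_le_add', ← sub_le_iff_le_add]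
  apply le_crossD
  intro w2
  have h1 := dist_triangle w w2 w1
  have h2 := dist_triangle w2 w1 w'
  have h3 := abs_le.1 (hg w2 w1)
  have h4 := dist_triangle (g w2) a (g w1)
  have c1 := dist_comm w w2
  have c2 := dist_comm (g w2) a
  linarith [dist_triangle w w2 w']

end Upper2

section Upper3

variable {A W : Type} [MetricSpace A] [MetricSpace W] [Nonempty W]

/-- Metric on the disjoint union realizing the correspondence induced by `g`. -/
noncomputable def sumMS (g : W → A) {D : ℝ} (hD : 0 < D)
    (hg : ∀ w w', |dist (g w) (g w') - dist w w'| ≤ D) : MetricSpace (A ⊕ W) where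
  dist := sumD g D
  dist_self x := by cases x <;> simp [sumD]
  dist_comm x y := by cases x <;> cases y <;> simp [sumD, dist_comm]
  dist_triangle x y z := by
    rcases x with a | w <;> rcases y with b | v <;> rcases z with c | u <;>
      simp only [sumD]
    · exact dist_triangle _ _ _
    · exact crossD_tri1 g a b u
    · exact crossD_tri3 g hg a c v
    · exact crossD_tri2 g a u v
    · exact (crossD_tri1 g c b w).trans (by rw [dist_comm b c, add_comm])
    · exact crossD_tri4 g hg b w u
    · rw [dist_comm w v, add_comm]; exact crossD_tri2 g c w v
    · exact dist_triangle _ _ _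
  eq_of_dist_eq_zero := by
    intro x y h
    rcases x with a | w <;> rcases y with b | v <;> simp only [sumD] at h
    · rw [dist_eq_zero] at h; rw [h]
    · exact absurd h (by have := crossD_nonneg g hD.le a v; intro hh; linarith)
    · exact absurd h (by have := crossD_nonneg g hD.le b w; intro hh; linarith)
    · rw [dist_eq_zero] at h; rw [h]

end Upper3

section GH

variable (A W : Type) [MetricSpace A] [CompactSpace A] [Nonempty A]
  [MetricSpace W] [CompactSpace W] [Nonempty W]

theorem ghDist_le_of_surj (g : W → A) (hgs : Function.Surjective g) {D : ℝ} (hD : 0 < D)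
    (hg : ∀ w w', |dist (g w) (g w') - dist w w'| ≤ D) :
    ghDist A W ≤ D / 2 := by
  letI : MetricSpace (A ⊕ W) := sumMS g hD hg
  have hl : Isometry (Sum.inl : A → A ⊕ W) := Isometry.of_dist_eq fun a b => rfl
  have hr : Isometry (Sum.inr : W → A ⊕ W) := Isometry.of_dist_eq fun a b => rfl
  refine (ghDist_le_hausdorffDist hl hr).trans ?_
  apply hausdorffDist_le_of_mem_dist (by positivity)
  · rintro x ⟨a, rfl⟩
    obtain ⟨w, rfl⟩ := hgs a
    refine ⟨Sum.inr w, mem_range_self _, ?_⟩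
    have : dist (Sum.inl (g w) : A ⊕ W) (Sum.inr w) = crossD g D (g w) w := rfl
    rw [this]
    have := crossD_le g D (g w) w w
    simp at this
    linarith
  · rintro x ⟨w, rfl⟩
    refine ⟨Sum.inl (g w), mem_range_self _, ?_⟩
    have : dist (Sum.inl (g w) : A ⊕ W) (Sum.inr w) = crossD g D (g w) w := rfl
    rw [dist_comm, this]
    have := crossD_le g D (g w) w w
    simp at this
    linarith

theorem dist_le_diam_add_two_ghDist (w w' : W) :
    dist w w' ≤ Metric.diam (univ : Set A) + 2 * ghDist A W := by
  set Φ := optimalGHInjl A W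
  set Ψ := optimalGHInjr A W
  have hΦ : Isometry Φ := isometry_optimalGHInjl A W
  have hΨ : Isometry Ψ := isometry_optimalGHInjr A W
  have hopt : hausdorffDist (range Φ) (range Ψ) = ghDist A W := hausdorffDist_optimal
  have fin : EMetric.hausdorffEdist (range Φ) (range Ψ) ≠ ⊤ :=
    hausdorffEdist_ne_top_of_nonempty_of_bounded (range_nonempty _) (range_nonempty _)
      (isCompact_range hΦ.continuous).isBounded (isCompact_range hΨ.continuous).isBounded
  apply le_of_forall_pos_le_add
  intro ε hε
  have hlt : hausdorffDist (range Φ) (range Ψ) < ghDist A W + ε / 2 := by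
    rw [hopt]; linarith
  obtain ⟨x, ⟨a, rfl⟩, ha⟩ := exists_dist_lt_of_hausdorffDist_lt' (mem_range_self w) hlt fin
  obtain ⟨x, ⟨a', rfl⟩, ha'⟩ := exists_dist_lt_of_hausdorffDist_lt' (mem_range_self w') hlt fin
  have h1 : dist w w' = dist (Ψ w) (Ψ w') := (hΨ.dist_eq _ _).symm
  have h2 : dist (Ψ w) (Ψ w') ≤ dist (Ψ w) (Φ a) + dist (Φ a) (Φ a') + dist (Φ a') (Ψ w') :=
    dist_triangle4 _ _ _ _
  have h3 : dist (Φ a) (Φ a') = dist a a' := hΦ.dist_eq _ _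
  have h4 : dist a a' ≤ Metric.diam (univ : Set A) :=
    dist_le_diam_of_mem isCompact_univ.isBounded (mem_univ _) (mem_univ _)
  have hc := dist_comm (Φ a) (Ψ w)
  linarith

theorem le_two_ghDist_of_connected [ConnectedSpace W] {l : ℝ}
    (h : ∀ a b : A, dist a b < l → a = b) {x y : A} (hxy : x ≠ y) :
    l ≤ 2 * ghDist A W := by
  by_contra hcon
  push_neg at hcon
  set r := ghDist A W with hr
  set δ := (l - 2 * r) / 4 with hδ
  have hδpos : 0 < δ := by simp [hδ]; linarith
  set Φ := optimalGHInjl A W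
  set Ψ := optimalGHInjr A W
  have hΦ : Isometry Φ := isometry_optimalGHInjl A W
  have hΨ : Isometry Ψ := isometry_optimalGHInjr A W
  have hopt : hausdorffDist (range Φ) (range Ψ) = ghDist A W := hausdorffDist_optimal
  have fin : EMetric.hausdorffEdist (range Φ) (range Ψ) ≠ ⊤ :=
    hausdorffEdist_ne_top_of_nonempty_of_bounded (range_nonempty _) (range_nonempty _)
      (isCompact_range hΦ.continuous).isBounded (isCompact_range hΨ.continuous).isBounded
  have hlt : hausdorffDist (range Φ) (range Ψ) < r + δ := by rw [hopt]; linarith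
  have key : ∀ w : W, ∃ a : A, dist (Φ a) (Ψ w) < r + δ := by
    intro w
    obtain ⟨x, ⟨a, rfl⟩, ha⟩ := exists_dist_lt_of_hausdorffDist_lt' (mem_range_self w) hlt fin
    exact ⟨a, ha⟩
  choose φ hφ using key
  -- φ is locally constant
  have hloc : IsLocallyConstant φ := by
    rw [IsLocallyConstant.iff_exists_open]
    intro w
    refine ⟨Metric.ball w (2 * δ), isOpen_ball, mem_ball_self (by linarith), ?_⟩
    intro w' hw'
    apply h
    have h1 : dist (φ w') (φ w) = dist (Φ (φ w')) (Φ (φ w)) := (hΦ.dist_eq _ _).symm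
    have h2 := dist_triangle4 (Φ (φ w')) (Ψ w') (Ψ w) (Φ (φ w))
    have h3 := hφ w'
    have h4 := hφ w
    have h5 : dist (Ψ w') (Ψ w) = dist w' w := hΨ.dist_eq _ _
    rw [mem_ball, dist_comm] at hw'
    rw [dist_comm (Φ (φ w'))] at h3
    have hc := dist_comm (Ψ w) (Φ (φ w))
    have hc2 := dist_comm w' w
    have hc3 := dist_comm (Φ (φ w')) (Ψ w')
    have : dist (φ w') (φ w) < l := by rw [h1]; linarith
    exact this
  have hconst : ∀ w w' : W, φ w = φ w' := fun w w' =>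
    hloc.apply_eq_of_preconnectedSpace w w'
  -- now derive x = y
  have near : ∀ a : A, ∃ w : W, dist (Φ a) (Ψ w) < r + δ := by
    intro a
    obtain ⟨x, ⟨w, rfl⟩, hw⟩ := exists_dist_lt_of_hausdorffDist_lt (mem_range_self a) hlt fin
    exact ⟨w, hw⟩
  have eqφ : ∀ a : A, ∀ w : W, dist (Φ a) (Ψ w) < r + δ → a = φ w := by
    intro a w hw
    apply h
    have h1 : dist a (φ w) = dist (Φ a) (Φ (φ w)) := (hΦ.dist_eq _ _).symm
    have h2 := dist_triangle (Φ a) (Ψ w) (Φ (φ w))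
    have h3 := hφ w
    rw [dist_comm (Φ (φ w))] at h3
    rw [h1]
    calc dist (Φ a) (Φ (φ w)) ≤ _ := h2
    _ < (r + δ) + (r + δ) := by linarith
    _ ≤ l := by rw [hδ]; linarith
  obtain ⟨w, hw⟩ := near x
  obtain ⟨w', hw'⟩ := near y
  exact hxy ((eqφ x w hw).trans ((hconst w w').trans (eqφ y w' hw').symm))

end GH

theorem ghDist_eq_value (A W : Type) [MetricSpace A] [CompactSpace A] [Nonempty A]
    [MetricSpace W] [CompactSpace W] [Nonempty W] [ConnectedSpace W]
    (hA : ∀ x y : A, x ≠ y → dist x y = Metric.diam (univ : Set A))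
    (hub : ∀ w w' : W, dist w w' ≤ 1)
    (w₀ w₁ : W) (h01 : dist w₀ w₁ = 1)
    (g : W → A) (hgs : Function.Surjective g)
    (hfib : ∀ w w', g w = g w' →
      dist w w' ≤ max (Metric.diam (univ : Set A)) (1 - Metric.diam (univ : Set A))) :
    ghDist A W
      = max (Metric.diam (univ : Set A)) (1 - Metric.diam (univ : Set A)) / 2 := by
  set dA := Metric.diam (univ : Set A) with hdA
  have hdA0 : 0 ≤ dA := diam_nonneg
  set D := max dA (1 - dA) with hD
  have hD1 : dA ≤ D := le_max_left _ _
  have hD2 : 1 - dA ≤ D := le_max_right _ _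
  have hDhalf : 1/2 ≤ D := by
    rcases le_total dA (1/2) with h' | h'
    · linarith
    · linarith
  have hDpos : 0 < D := by linarith
  have ghnn : 0 ≤ ghDist A W := by
    have : ghDist A W = dist (toGHSpace A) (toGHSpace W) := rfl
    rw [this]; exact dist_nonneg
  have upper : ghDist A W ≤ D / 2 := by
    apply ghDist_le_of_surj A W g hgs hDpos
    intro w w'
    by_cases hgw : g w = g w'
    · rw [hgw, dist_self]
      rw [abs_sub_comm, sub_zero, abs_of_nonneg dist_nonneg]
      exact hfib w w' hgw
    · rw [hA _ _ hgw]
      have h1 := hub w w'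
      have h2 : (0:ℝ) ≤ dist w w' := dist_nonneg
      rw [abs_le]
      constructor <;> linarith
  have lower1 : 1 - dA ≤ 2 * ghDist A W := by
    have := dist_le_diam_add_two_ghDist A W w₀ w₁
    rw [h01] at this
    linarith
  have lower2 : dA ≤ 2 * ghDist A W := by
    by_cases hex : ∃ x y : A, x ≠ y
    · obtain ⟨x, y, hxy⟩ := hex
      apply le_two_ghDist_of_connected A W (l := dA) _ hxy
      intro a b hab
      by_contra hne
      rw [hA a b hne] at hab
      exact lt_irrefl _ hab
    · push_neg at hex
      have : dA = 0 := diam_subsingleton fun x _ y _ => hex x y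
      rw [this]; linarith
  have lower : D ≤ 2 * ghDist A W := max_le lower2 lower1
  linarith

/-- partition map from the unit interval onto `Fin n`, then to `Δ`. -/
noncomputable def gseg (n : ℕ) (hn : 1 ≤ n) {Δ : Type} (e : Fin n → Δ) (t : unitInterval) : Δ :=
  e ⟨min ⌊(t : ℝ) * n⌋₊ (n - 1), by omega⟩

lemma gseg_bounds (n : ℕ) (hn : 1 ≤ n) (t : unitInterval) :
    ((min ⌊(t : ℝ) * n⌋₊ (n - 1) : ℕ) : ℝ) ≤ (t : ℝ) * n ∧
      (t : ℝ) * n ≤ ((min ⌊(t : ℝ) * n⌋₊ (n - 1) : ℕ) : ℝ) + 1 := by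
  have htn0 : (0:ℝ) ≤ (t : ℝ) * n := mul_nonneg t.2.1 (Nat.cast_nonneg n)
  constructor
  · calc ((min ⌊(t : ℝ) * n⌋₊ (n - 1) : ℕ) : ℝ) ≤ (⌊(t : ℝ) * n⌋₊ : ℝ) := by
          exact_mod_cast Nat.cast_le.2 (min_le_left _ _)
    _ ≤ (t : ℝ) * n := Nat.floor_le htn0
  · rcases le_or_gt (⌊(t : ℝ) * n⌋₊) (n - 1) with h' | h'
    · rw [min_eq_left h']
      exact (Nat.lt_floor_add_one _).le
    · rw [min_eq_right h'.le]
      have hn' : ((n - 1 : ℕ) : ℝ) + 1 = (n : ℝ) := by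
        have : (1:ℕ) ≤ n := hn
        push_cast [Nat.cast_sub this]
        ring
      rw [hn']
      calc (t : ℝ) * n ≤ 1 * n := by
            apply mul_le_mul_of_nonneg_right t.2.2 (Nat.cast_nonneg n)
      _ = n := one_mul _

lemma gseg_surjective (n : ℕ) (hn : 1 ≤ n) {Δ : Type} (e : Fin n ≃ Δ) :
    Function.Surjective (gseg n hn e) := by
  intro a
  set i := e.symm a with hi
  have hin : (i : ℕ) < n := i.2
  have hn0 : (n : ℝ) ≠ 0 := Nat.cast_ne_zero.2 (by omega)
  have hmem : ((i : ℕ) : ℝ) / n ∈ unitInterval := by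
    constructor
    · positivity
    · rw [div_le_one (by positivity)]
      exact_mod_cast hin.le
  refine ⟨⟨((i : ℕ) : ℝ) / n, hmem⟩, ?_⟩
  unfold gseg
  have h1 : (((i : ℕ) : ℝ) / n) * n = ((i : ℕ) : ℝ) := div_mul_cancel₀ _ hn0
  have h2 : ⌊(((i : ℕ) : ℝ) / n) * n⌋₊ = (i : ℕ) := by
    rw [h1]; exact Nat.floor_natCast _
  have h3 : min ⌊(((i : ℕ) : ℝ) / n) * n⌋₊ (n - 1) = (i : ℕ) := by
    rw [h2]; exact min_eq_left (by omega)
  have : (⟨min ⌊(((i : ℕ) : ℝ) / n) * n⌋₊ (n - 1), by omega⟩ : Fin n) = i := by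
    apply Fin.ext; simpa using h3
  rw [this, hi, e.apply_symm_apply]

lemma gseg_fiber (n : ℕ) (hn : 1 ≤ n) {Δ : Type} (e : Fin n ≃ Δ) (t t' : unitInterval)
    (h : gseg n hn e t = gseg n hn e t') : dist t t' ≤ 1 / n := by
  have heq : min ⌊(t : ℝ) * n⌋₊ (n - 1) = min ⌊(t' : ℝ) * n⌋₊ (n - 1) := by
    unfold gseg at h
    simpa using congrArg Fin.val (e.injective h)
  obtain ⟨l1, u1⟩ := gseg_bounds n hn t
  obtain ⟨l2, u2⟩ := gseg_bounds n hn t'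
  rw [heq] at l1 u1
  have hn0 : (0:ℝ) < n := by exact_mod_cast (by omega : 0 < n)
  have hinv : (1:ℝ) / n * n = 1 := by field_simp
  rw [Subtype.dist_eq, Real.dist_eq, abs_le]
  constructor <;> nlinarith [l1, u1, l2, u2, hn0, hinv]

/-- Let `X = [0,1]` and let `Z` be a connected (compact, nonempty) metric space with
`diam Z ≤ 1/2`. Let `Y = X × Z` carry the max-metric (the product metric). Then
`d_GH(lΔₙ, X) = d_GH(lΔₙ, Y)` for every `n ≥ 1` and every `l ≥ 0`:
`X` and `Y` are indistinguishable. -/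
theorem segment_prod_indistinguishable (Z : Type) [MetricSpace Z] [CompactSpace Z]
    [Nonempty Z] [ConnectedSpace Z] (hZ : Metric.diam (Set.univ : Set Z) ≤ 1 / 2)
    (n : ℕ) (hn : 1 ≤ n) (l : ℝ) (hl : 0 ≤ l)
    (Δ : Type) [MetricSpace Δ] [Fintype Δ] [Nonempty Δ] (hΔ : IsSimplexOf Δ n l) :
    GromovHausdorff.ghDist Δ unitInterval = GromovHausdorff.ghDist Δ (unitInterval × Z) := by
  obtain ⟨hcard, hdist⟩ := hΔ
  set dA := Metric.diam (Set.univ : Set Δ) with hdA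
  have hdA0 : 0 ≤ dA := diam_nonneg
  have hA : ∀ x y : Δ, x ≠ y → dist x y = dA := by
    intro x y hxy
    rw [hdist x y hxy]
    apply le_antisymm
    · rw [← hdist x y hxy]
      exact dist_le_diam_of_mem isCompact_univ.isBounded (mem_univ _) (mem_univ _)
    · apply diam_le_of_forall_dist_le hl
      intro a _ b _
      by_cases hab : a = b
      · rw [hab, dist_self]; exact hl
      · rw [hdist a b hab]
  have hmaxhalf : (1:ℝ)/2 ≤ max dA (1 - dA) := by
    rcases le_total dA (1/2) with h' | h'
    · have : (1:ℝ)/2 ≤ 1 - dA := by linarith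
      exact this.trans (le_max_right _ _)
    · exact h'.trans (le_max_left _ _)
  have hninv : (1:ℝ)/(n:ℝ) ≤ max dA (1 - dA) := by
    rcases Nat.lt_or_ge n 2 with h2 | h2
    · have hn1 : n = 1 := by omega
      have hsub : Subsingleton Δ := Fintype.card_le_one_iff_subsingleton.1 (by omega)
      have hdA00 : dA = 0 := diam_subsingleton subsingleton_univ
      rw [hdA00, hn1]
      norm_num
    · have : (1:ℝ)/(n:ℝ) ≤ 1/2 := by
        apply one_div_le_one_div_of_le (by norm_num)
        exact_mod_cast h2
      linarith
  set e : Fin n ≃ Δ := (Fintype.equivFinOfCardEq hcard).symm with he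
  have hubX : ∀ w w' : unitInterval, dist w w' ≤ 1 := by
    intro w w'
    rw [Subtype.dist_eq, Real.dist_eq]
    have h1 := w.2.1; have h2 := w.2.2; have h3 := w'.2.1; have h4 := w'.2.2
    rw [abs_le]; constructor <;> linarith
  have h01X : dist (0 : unitInterval) (1 : unitInterval) = 1 := by
    rw [Subtype.dist_eq, Real.dist_eq]
    norm_num
  have eq1 : ghDist Δ unitInterval = max dA (1 - dA) / 2 :=
    ghDist_eq_value Δ unitInterval hA hubX 0 1 h01X (gseg n hn e)
      (gseg_surjective n hn e)
      (fun t t' h => (gseg_fiber n hn e t t' h).trans hninv)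
  have hZ' : ∀ z z' : Z, dist z z' ≤ 1/2 := fun z z' =>
    (dist_le_diam_of_mem isCompact_univ.isBounded (mem_univ _) (mem_univ _)).trans hZ
  have hubY : ∀ p q : unitInterval × Z, dist p q ≤ 1 := by
    intro p q
    rw [Prod.dist_eq]
    exact max_le (hubX _ _) ((hZ' _ _).trans (by norm_num))
  set z0 : Z := Classical.arbitrary Z
  have h01Y : dist ((0 : unitInterval), z0) ((1 : unitInterval), z0) = 1 := by
    rw [Prod.dist_eq]
    simp [h01X]
  have eq2 : ghDist Δ (unitInterval × Z) = max dA (1 - dA) / 2 := by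
    apply ghDist_eq_value Δ (unitInterval × Z) hA hubY (0, z0) (1, z0) h01Y
      (fun p => gseg n hn e p.1)
      ((gseg_surjective n hn e).comp Prod.fst_surjective)
    intro p q h
    rw [Prod.dist_eq]
    exact max_le ((gseg_fiber n hn e p.1 q.1 h).trans hninv) ((hZ' _ _).trans hmaxhalf)
  rw [eq1, eq2]
end
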